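/- arXiv:2211.12801 — 2 statements merged into one kernel-verified Lean document; each statement's English description precedes it below -/
import Mathlib

section
/- (Cycle lemma) Let (ξ₁,...,ξ_n) be a sequence of nonnegative integers with ∑_{i=1}^n (ξ_i − 1) = −k for a positive integer k. Then exactly k of the n cyclic shifts of the sequence satisfy ∑_{i=1}^m (ξ_i − 1) > −k for all 1 ≤ m < n. -/
/-!
Extend `ξ` periodically and let `S m = ∑_{i<m} (ξ_{i mod n} - 1)`: a walk with steps `≥ -1`
that drops by `k` over every period. The shift starting at `j` is good exactly when `S (j + n)`
is a strict record minimum of `S`. A walk that cannot jump over a level reaches each lower level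
first at a record time, and record values are pairwise distinct; so, with `a = min_{m<n} S m`,
the record times in the window `[n, 2n)` are the first passages through the `k` levels
`a - k, …, a - 1`.
-/

open Finset

def IsRecordMin {α : Type*} [Preorder α] (S : ℕ → α) (p : ℕ) : Prop :=
  ∀ m < p, S p < S m

theorem IsRecordMin.le_of_apply_le {α : Type*} [Preorder α] {S : ℕ → α} {p q : ℕ}
    (hp : IsRecordMin S p) (hq : S q ≤ S p) : p ≤ q := by
  by_contra! h
  exact (hp q h).not_ge hq

/-- The first time the walk is `≤ v` is a record time, and a walk with steps `≥ -1` cannot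
jump over `v`. -/
theorem exists_isRecordMin_eq {S : ℕ → ℤ} (hS : ∀ m, S m - 1 ≤ S (m + 1)) {v : ℤ}
    (h0 : v < S 0) {q : ℕ} (hq : S q ≤ v) : ∃ p, IsRecordMin S p ∧ S p = v := by
  classical
  have hex : ∃ m, S m ≤ v := ⟨q, hq⟩
  have hfirst : S (Nat.find hex) ≤ v := Nat.find_spec hex
  have hbefore : ∀ m < Nat.find hex, v < S m := fun m hm => not_le.mp (Nat.find_min hex hm)
  obtain ⟨p, hp⟩ : ∃ p, Nat.find hex = p + 1 :=
    Nat.exists_eq_succ_of_ne_zero fun h => by rw [h] at hfirst; omega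
  have hval : S (Nat.find hex) = v := by
    have := hbefore p (by omega)
    have := hS p
    rw [hp] at hfirst ⊢
    omega
  exact ⟨Nat.find hex, fun m hm => by rw [hval]; exact hbefore m hm, hval⟩

section QuasiPeriodic

variable {S : ℕ → ℤ} {n k : ℕ}

theorem isRecordMin_add_iff (hper : ∀ m, S (m + n) = S m - k) (hk : 0 < k) {j : ℕ}
    (hj : j < n) :
    IsRecordMin S (j + n) ↔ ∀ m, 1 ≤ m → m < n → -(k : ℤ) < S (j + m) - S j := by
  rw [IsRecordMin, hper]
  constructor
  · intro h m _ hmn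
    have := h (j + m) (by omega)
    omega
  · intro h m hm
    rcases lt_trichotomy m j with hmj | rfl | hjm
    · have := h (m + n - j) (by omega) (by omega)
      rw [show j + (m + n - j) = m + n by omega, hper] at this
      omega
    · omega
    · have := h (m - j) (by omega) (by omega)
      rw [show j + (m - j) = m by omega] at this
      omega

theorem card_isRecordMin_add (hS : ∀ m, S m - 1 ≤ S (m + 1))
    (hper : ∀ m, S (m + n) = S m - k) (hk : 0 < k) :
    Nat.card {j : Fin n // IsRecordMin S (j + n)} = k := by
  classical
  have hn : n ≠ 0 := by
    rintro rfl
    have := hper 0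
    rw [Nat.add_zero] at this
    omega
  obtain ⟨m₀, hminn, hmin⟩ := exists_min_image (range n) S (nonempty_range_iff.mpr hn)
  simp only [mem_range] at hminn hmin
  rw [Nat.card_eq_fintype_card, Fintype.card_subtype]
  calc #{j : Fin n | IsRecordMin S (j + n)} = #(Ico (S m₀ - k) (S m₀)) := ?_
    _ = k := by simp
  apply card_bij (fun (j : Fin n) _ => S (j + n))
  · intro j hj
    rw [mem_filter] at hj
    have := hj.2 m₀ (by omega)
    have := hmin j j.isLt
    have := hper j
    rw [mem_Ico]
    omega
  · intro i hi j hj hij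
    rw [mem_filter] at hi hj
    have := le_antisymm (hi.2.le_of_apply_le hij.ge) (hj.2.le_of_apply_le hij.le)
    exact Fin.ext (by omega)
  · intro v hv
    rw [mem_Ico] at hv
    have hreach : S (m₀ + n) ≤ v := (hper m₀).trans_le hv.1
    obtain ⟨p, hrec, rfl⟩ := exists_isRecordMin_eq hS (hv.2.trans_le (hmin 0 (by omega))) hreach
    have hnp : n ≤ p := by
      by_contra! h
      exact hv.2.not_ge (hmin p h)
    have hp2n : p < n + n := by
      have := hrec.le_of_apply_le hreach
      omega
    exact ⟨⟨p - n, by omega⟩, by simpa [Nat.sub_add_cancel hnp] using hrec,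
      by simp [Nat.sub_add_cancel hnp]⟩

end QuasiPeriodic

def cyclicWalk (ξ : ℕ → ℕ) (n m : ℕ) : ℤ :=
  ∑ i ∈ range m, ((ξ (i % n) : ℤ) - 1)

theorem cyclicWalk_sub_one_le (ξ : ℕ → ℕ) (n m : ℕ) :
    cyclicWalk ξ n m - 1 ≤ cyclicWalk ξ n (m + 1) := by
  rw [cyclicWalk, cyclicWalk, sum_range_succ]
  omega

theorem cyclicWalk_add_sub (ξ : ℕ → ℕ) (n j m : ℕ) :
    cyclicWalk ξ n (j + m) - cyclicWalk ξ n j =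
      ∑ i ∈ range m, (ξ ((j + i) % n) : ℤ) - m := by
  rw [cyclicWalk, cyclicWalk, sum_range_add, sum_sub_distrib]
  simp

theorem cyclicWalk_period (ξ : ℕ → ℕ) (n : ℕ) :
    cyclicWalk ξ n n = ∑ i ∈ range n, (ξ i : ℤ) - n := by
  rw [cyclicWalk, sum_sub_distrib,
    sum_congr rfl fun i hi => by rw [Nat.mod_eq_of_lt (mem_range.mp hi)]]
  simp

theorem cyclicWalk_add_period (ξ : ℕ → ℕ) (n m : ℕ) :
    cyclicWalk ξ n (m + n) = cyclicWalk ξ n m + cyclicWalk ξ n n := by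
  rw [add_comm m n, cyclicWalk, sum_range_add]
  simp [cyclicWalk, add_comm]

theorem cycle_lemma_general (n k : ℕ) (hk : 0 < k) (ξ : ℕ → ℕ)
    (hsum : (∑ i ∈ range n, (ξ i : ℤ)) - n = -k) :
    Nat.card {j : Fin n //
      ∀ m, 1 ≤ m → m < n →
        (∑ i ∈ range m, (ξ ((j.val + i) % n) : ℤ)) - m > -(k : ℤ)} = k := by
  have hper : ∀ m, cyclicWalk ξ n (m + n) = cyclicWalk ξ n m - k := fun m => by
    rw [cyclicWalk_add_period, cyclicWalk_period, hsum, sub_eq_add_neg]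
  refine .trans (Nat.card_congr (Equiv.subtypeEquivRight fun j => ?_))
    (card_isRecordMin_add (cyclicWalk_sub_one_le ξ n) hper hk)
  simp only [gt_iff_lt, ← cyclicWalk_add_sub, isRecordMin_add_iff hper hk j.isLt]

/-- Cycle lemma: if `(ξ₁,…,ξ_n)` are nonnegative integers with `∑ (ξᵢ − 1) = −k`, `k > 0`,
then exactly `k` of the `n` cyclic shifts satisfy `∑_{i=1}^m (ξᵢ − 1) > −k` for all
`1 ≤ m < n`. -/
theorem cycle_lemma (n k : ℕ) (hn : 0 < n) (hk : 0 < k) (ξ : ℕ → ℕ)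
    (hsum : (∑ i ∈ range n, (ξ i : ℤ)) - n = -k) :
    Nat.card {j : Fin n //
      ∀ m, 1 ≤ m → m < n →
        (∑ i ∈ range m, (ξ ((j.val + i) % n) : ℤ)) - m > -(k : ℤ)} = k :=
  cycle_lemma_general n k hk ξ hsum
end

section
/- Let ξ₁, ξ₂, ... be i.i.d. nonnegative integer-valued random variables and k a positive integer. Then P(∑_{i=1}^m (ξ_i−1) > −k for all 1 ≤ m < n, and ∑_{i=1}^n (ξ_i−1) = −k) = (k/n) · P(∑_{i=1}^n (ξ_i−1) = −k). -/
open MeasureTheory ProbabilityTheory Finset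

/-!
Extend the steps `a₀, …, aₙ₋₁` periodically and let `S` be the walk with steps `aᵢ - 1`: it moves
down by at most one per step and drops by `k` over each period. The rotation starting at `r`
stays above `-k` before time `n` exactly when `S r` is a strict running minimum lying below
`M + k`, where `M` is the minimum of `S` on `[0, n)`. Such `r` are the first passage times of `S`
to the levels `M, …, M + k - 1`, so exactly `k` rotations qualify when `Sₙ = -k`, and none
otherwise. For i.i.d. steps all rotations of `(ξ₀, …, ξₙ₋₁)` have the same law, so summing the
probabilities of the `n` rotated events gives `n · P(first passage at n) = k · P(Sₙ = -k)`.
-/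

namespace CycleLemma

section SkipFreeWalk

variable {S : ℕ → ℤ}

lemma exists_le_eq_of_le (hstep : ∀ m, S m - 1 ≤ S (m + 1)) {q : ℕ} {v : ℤ}
    (hq : S q ≤ v) (hv : v ≤ S 0) : ∃ m ≤ q, S m = v := by
  induction q with
  | zero => exact ⟨0, le_rfl, le_antisymm hq hv⟩
  | succ q ih =>
    rcases hq.eq_or_lt with h | h
    · exact ⟨q + 1, le_rfl, h⟩
    · obtain ⟨m, hmq, hm⟩ := ih (by linarith [hstep q])
      exact ⟨m, hmq.trans q.le_succ, hm⟩

lemma exists_le_eq_forall_lt_lt (hstep : ∀ m, S m - 1 ≤ S (m + 1)) {q : ℕ} {v : ℤ}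
    (hq : S q ≤ v) (hv : v ≤ S 0) : ∃ r ≤ q, S r = v ∧ ∀ j < r, v < S j := by
  classical
  have hex : ∃ m, S m = v := (exists_le_eq_of_le hstep hq hv).imp fun _ h => h.2
  refine ⟨Nat.find hex, ?_, Nat.find_spec hex, fun j hj => ?_⟩
  · obtain ⟨m, hmq, hm⟩ := exists_le_eq_of_le hstep hq hv
    exact (Nat.find_min' hex hm).trans hmq
  · by_contra! hle
    obtain ⟨m, hmj, hm⟩ := exists_le_eq_of_le hstep hle hv
    exact Nat.find_min hex (hmj.trans_lt hj) hm

variable {n k : ℕ}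

lemma forall_sub_lt_add_iff (hper : ∀ m, S (m + n) = S m - k) (hk : 0 < k) {m₀ r : ℕ}
    (hm₀ : m₀ < n) (hmin : ∀ j < n, S m₀ ≤ S j) (hr : r < n) :
    (∀ m : ℕ, 1 ≤ m → m < n → S r - (k : ℤ) < S (r + m)) ↔
      (∀ j < r, S r < S j) ∧ S r < S m₀ + (k : ℤ) := by
  have hk' : (0 : ℤ) < k := by exact_mod_cast hk
  constructor
  · intro h
    have hrec : ∀ j < r, S r < S j := fun j hj => by
      have := h (j + n - r) (by omega) (by omega)
      rw [show r + (j + n - r) = j + n by omega, hper] at this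
      linarith
    refine ⟨hrec, ?_⟩
    rcases lt_trichotomy m₀ r with hlt | rfl | hgt
    · linarith [hrec m₀ hlt]
    · linarith
    · have := h (m₀ - r) (by omega) (by omega)
      rw [show r + (m₀ - r) = m₀ by omega] at this
      linarith
  · rintro ⟨hrec, hlow⟩ m hm hmn
    rcases lt_or_ge (r + m) n with h | h
    · linarith [hmin _ h]
    · have := hrec (r + m - n) (by omega)
      rw [show r + m = r + m - n + n by omega, hper]
      linarith

theorem card_filter_forall_sub_lt_add (hstep : ∀ m, S m - 1 ≤ S (m + 1)) (h0 : S 0 = 0)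
    (hper : ∀ m, S (m + n) = S m - k) (hn : 0 < n) (hk : 0 < k) :
    #{r ∈ range n | ∀ m : ℕ, 1 ≤ m → m < n → S r - (k : ℤ) < S (r + m)} = k := by
  obtain ⟨m₀, hm₀, hmin⟩ := exists_min_image (range n) S (nonempty_range_iff.2 hn.ne')
  simp only [mem_range] at hm₀ hmin
  -- `S m₀ ≤ S (n - 1) ≤ S n + 1 = 1 - k`, so the levels in `[S m₀, S m₀ + k)` are all `≤ S 0`
  have hlow : S m₀ + k ≤ 1 := by
    have hSn : S n = -k := by simpa [h0] using hper 0
    have := hstep (n - 1)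
    rw [Nat.sub_add_cancel hn, hSn] at this
    linarith [hmin (n - 1) (by omega)]
  rw [filter_congr fun r hr => forall_sub_lt_add_iff hper hk hm₀ hmin (mem_range.1 hr)]
  calc #{r ∈ range n | (∀ j < r, S r < S j) ∧ S r < S m₀ + (k : ℤ)}
      = #(Ico (S m₀) (S m₀ + k)) := by
        refine card_bij (fun r _ => S r) ?_ ?_ ?_
        · simp only [mem_filter, mem_range, mem_Ico]
          exact fun r ⟨hr, _, hlt⟩ => ⟨hmin r hr, hlt⟩
        · simp only [mem_filter, mem_range]
          intro r ⟨_, hrec, _⟩ r' ⟨_, hrec', _⟩ h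
          by_contra hne
          rcases Nat.lt_or_gt_of_ne hne with hlt | hlt
          · exact (hrec' r hlt).ne h.symm
          · exact (hrec r' hlt).ne h
        · intro v hv
          rw [mem_Ico] at hv
          obtain ⟨r, hr, rfl, hrec⟩ :=
            exists_le_eq_forall_lt_lt hstep hv.1 (by rw [h0]; linarith)
          exact ⟨r, mem_filter.2 ⟨mem_range.2 (hr.trans_lt hm₀), hrec, hv.2⟩, rfl⟩
    _ = k := by simp

end SkipFreeWalk

def walk (a : ℕ → ℕ) (m : ℕ) : ℤ := (∑ i ∈ range m, (a i : ℤ)) - m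

-- The walk moves down by at most one per step, so it first reaches `-k` at time `n`.
def IsFirstPassage (n k : ℕ) (a : ℕ → ℕ) : Prop :=
  (∀ m, 1 ≤ m → m < n → walk a m > -(k : ℤ)) ∧ walk a n = -(k : ℤ)

def rotate (n r : ℕ) (a : ℕ → ℕ) : ℕ → ℕ := fun i => a ((r + i) % n)

variable {n k : ℕ}

lemma walk_zero (a : ℕ → ℕ) : walk a 0 = 0 := by simp [walk]

lemma sub_one_le_walk_succ (a : ℕ → ℕ) (m : ℕ) : walk a m - 1 ≤ walk a (m + 1) := by
  simp only [walk, sum_range_succ]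
  push_cast
  linarith [(a m).cast_nonneg (α := ℤ)]

lemma walk_add (a : ℕ → ℕ) (m l : ℕ) :
    walk a (m + l) = walk a m + walk (fun i => a (m + i)) l := by
  simp only [walk, sum_range_add]
  push_cast
  ring

lemma dependsOn_walk (m : ℕ) : DependsOn (walk · m) (Set.Iio m) := fun a b h => by
  simp only [walk]
  rw [sum_congr rfl fun i hi => by rw [h i (by simpa using hi)]]

lemma dependsOn_isFirstPassage : DependsOn (IsFirstPassage n k) (Set.Iio n) := fun a b h => by
  have hw : ∀ m ≤ n, walk a m = walk b m := fun m hm =>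
    dependsOn_walk m fun i hi => h i (lt_of_lt_of_le hi hm)
  simp +contextual only [IsFirstPassage, hw, le_of_lt, le_rfl]

lemma walk_mod_add (a : ℕ → ℕ) (m : ℕ) :
    walk (fun i => a (i % n)) (m + n) = walk (fun i => a (i % n)) m + walk a n := by
  rw [add_comm, walk_add, add_comm]
  congr 1
  · simp only [Nat.add_mod_left]
  · exact dependsOn_walk n fun i hi => by simp [Nat.mod_eq_of_lt hi]

lemma walk_rotate (a : ℕ → ℕ) (r m : ℕ) :
    walk (rotate n r a) m = walk (fun i => a (i % n)) (r + m) - walk (fun i => a (i % n)) r := by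
  rw [walk_add, add_sub_cancel_left]
  rfl

lemma isFirstPassage_rotate_iff (a : ℕ → ℕ) (r : ℕ) :
    IsFirstPassage n k (rotate n r a) ↔
      (∀ m : ℕ, 1 ≤ m → m < n →
        walk (fun i => a (i % n)) r - (k : ℤ) < walk (fun i => a (i % n)) (r + m)) ∧
      walk a n = -(k : ℤ) := by
  simp only [IsFirstPassage, walk_rotate, walk_mod_add, add_sub_cancel_left, gt_iff_lt,
    neg_lt_sub_iff_lt_add', sub_lt_iff_lt_add]

open scoped Classical in
theorem card_filter_isFirstPassage_rotate (hn : 0 < n) (hk : 0 < k) (a : ℕ → ℕ) :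
    #{r ∈ range n | IsFirstPassage n k (rotate n r a)} = if walk a n = -k then k else 0 := by
  simp only [isFirstPassage_rotate_iff]
  split_ifs with h
  · simp only [h, and_true]
    exact card_filter_forall_sub_lt_add (sub_one_le_walk_succ _) (walk_zero _)
      (fun m => by rw [walk_mod_add, h, sub_eq_add_neg]) hn hk
  · simp [h]

end CycleLemma

open CycleLemma

section

variable {Ω κ β : Type*} [MeasurableSpace Ω] {μ : Measure Ω} [MeasurableSpace β]
  {ξ : κ → Ω → β}

lemma ProbabilityTheory.iIndepFun.identDistrib_comp {ι : Type*} [Fintype ι]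
    (hindep : iIndepFun ξ μ) (hident : ∀ i j, IdentDistrib (ξ i) (ξ j) μ μ) {σ τ : ι → κ}
    (hσ : σ.Injective) (hτ : τ.Injective) :
    IdentDistrib (fun ω i => ξ (σ i) ω) (fun ω i => ξ (τ i) ω) μ μ := by
  have hξ : ∀ i, AEMeasurable (ξ i) μ := fun i => (hident i i).aemeasurable_fst
  refine ⟨aemeasurable_pi_lambda _ fun _ => hξ _, aemeasurable_pi_lambda _ fun _ => hξ _, ?_⟩
  rw [(hindep.precomp hσ).map_fun_eq_pi_map fun _ => hξ _,
    (hindep.precomp hτ).map_fun_eq_pi_map fun _ => hξ _]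
  congr 1
  funext i
  exact (hident _ _).map_eq

variable [Countable β] [MeasurableSingletonClass β]

lemma nullMeasurableSet_setOf_of_dependsOn {s : Set κ} [Finite s] {P : (κ → β) → Prop}
    (hP : DependsOn P s) (hξ : ∀ i, AEMeasurable (ξ i) μ) :
    NullMeasurableSet {ω | P fun i => ξ i ω} μ := by
  obtain ⟨g, rfl⟩ := dependsOn_iff_exists_comp.1 hP
  have := Fintype.ofFinite s
  exact (aemeasurable_pi_lambda (fun ω (i : s) => ξ i ω) fun i => hξ i)
    |>.nullMeasurableSet_preimage (Set.to_countable _).measurableSet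

lemma measure_setOf_comp_eq_of_dependsOn (hindep : iIndepFun ξ μ)
    (hident : ∀ i j, IdentDistrib (ξ i) (ξ j) μ μ) {s : Set κ} [Finite s]
    {P : (κ → β) → Prop} (hP : DependsOn P s) {σ : κ → κ} (hσ : s.InjOn σ) :
    μ {ω | P fun i => ξ (σ i) ω} = μ {ω | P fun i => ξ i ω} := by
  obtain ⟨g, rfl⟩ := dependsOn_iff_exists_comp.1 hP
  have := Fintype.ofFinite s
  exact (hindep.identDistrib_comp hident hσ.injective Subtype.val_injective).measure_mem_eq
    (Set.to_countable _).measurableSet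

open scoped Classical in
lemma MeasureTheory.sum_measure_eq_mul_measure_of_card {ι : Type*} (s : Finset ι)
    {A : ι → Set Ω} {E : Set Ω} {c : ℕ}
    (hA : ∀ i, NullMeasurableSet (A i) μ) (hE : NullMeasurableSet E μ)
    (hcount : ∀ ω, #{i ∈ s | ω ∈ A i} = if ω ∈ E then c else 0) :
    ∑ i ∈ s, μ (A i) = c * μ E := by
  calc ∑ i ∈ s, μ (A i) = ∑ i ∈ s, ∫⁻ ω, (A i).indicator 1 ω ∂μ := by
        simp_rw [lintegral_indicator_one₀ (hA _)]
    _ = ∫⁻ ω, ∑ i ∈ s, (A i).indicator 1 ω ∂μ :=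
        (lintegral_finsetSum' _ fun i _ => aemeasurable_one.indicator₀ (hA i)).symm
    _ = ∫⁻ ω, E.indicator (fun _ => (c : ENNReal)) ω ∂μ := lintegral_congr fun ω => by
        simp only [Set.indicator_apply, Pi.one_apply, sum_boole, hcount, Nat.cast_ite,
          Nat.cast_zero]
    _ = c * μ E := lintegral_indicator_const₀ hE c

end

lemma Nat.injOn_add_mod (n r : ℕ) : (Set.Iio n).InjOn fun i => (r + i) % n :=
  fun _ hi _ hj h => Nat.ModEq.eq_of_lt_of_lt (Nat.ModEq.add_left_cancel' r h) hi hj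

theorem prob_cycle_lemma_general
    {Ω : Type*} [MeasurableSpace Ω] (μ : Measure Ω)
    (ξ : ℕ → Ω → ℕ)
    (hindep : iIndepFun ξ μ)
    (hident : ∀ i j, IdentDistrib (ξ i) (ξ j) μ μ)
    (n k : ℕ) (hk : 0 < k) :
    μ {ω | (∀ m, 1 ≤ m → m < n →
            (∑ i ∈ range m, (ξ i ω : ℤ)) - m > -(k : ℤ)) ∧
          (∑ i ∈ range n, (ξ i ω : ℤ)) - n = -(k : ℤ)}
      = ((k : ENNReal) / n) * μ {ω | (∑ i ∈ range n, (ξ i ω : ℤ)) - n = -(k : ℤ)} := by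
  rcases n.eq_zero_or_pos with rfl | hn
  · simp [hk.ne']
  have hξ : ∀ i, AEMeasurable (ξ i) μ := fun i => (hident i i).aemeasurable_fst
  have hrot : ∀ r, μ {ω | IsFirstPassage n k (rotate n r (ξ · ω))} =
      μ {ω | IsFirstPassage n k (ξ · ω)} := fun r =>
    measure_setOf_comp_eq_of_dependsOn hindep hident dependsOn_isFirstPassage
      (Nat.injOn_add_mod n r)
  have hsum : ∑ r ∈ range n, μ {ω | IsFirstPassage n k (rotate n r (ξ · ω))} =
      k * μ {ω | walk (ξ · ω) n = -k} :=
    sum_measure_eq_mul_measure_of_card _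
      (fun r => nullMeasurableSet_setOf_of_dependsOn dependsOn_isFirstPassage fun i => hξ _)
      (nullMeasurableSet_setOf_of_dependsOn (P := fun a => walk a n = -k)
        (fun _ _ h => congrArg (· = -(k : ℤ)) (dependsOn_walk n h)) hξ)
      fun ω => by convert card_filter_isFirstPassage_rotate hn hk (ξ · ω) using 2 <;> rfl
  rw [sum_congr rfl fun r _ => hrot r, sum_const, card_range, nsmul_eq_mul] at hsum
  change μ {ω | IsFirstPassage n k (ξ · ω)} = k / n * μ {ω | walk (ξ · ω) n = -k}
  rw [← ENNReal.mul_div_right_comm, ENNReal.eq_div_iff (by exact_mod_cast hn.ne')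
    (ENNReal.natCast_ne_top n), hsum]

/-- Probabilistic cycle lemma: for i.i.d. nonnegative integer random variables `ξᵢ`,
`P(∑_{i=1}^m (ξᵢ−1) > −k for all 1 ≤ m < n, ∑_{i=1}^n (ξᵢ−1) = −k)
  = (k/n) · P(∑_{i=1}^n (ξᵢ−1) = −k)`. -/
theorem prob_cycle_lemma
    {Ω : Type*} [MeasurableSpace Ω] (μ : Measure Ω) [IsProbabilityMeasure μ]
    (ξ : ℕ → Ω → ℕ) (hmeas : ∀ i, Measurable (ξ i))
    (hindep : iIndepFun ξ μ)
    (hident : ∀ i j, IdentDistrib (ξ i) (ξ j) μ μ)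
    (n k : ℕ) (hn : 0 < n) (hk : 0 < k) :
    μ {ω | (∀ m, 1 ≤ m → m < n →
            (∑ i ∈ range m, (ξ i ω : ℤ)) - m > -(k : ℤ)) ∧
          (∑ i ∈ range n, (ξ i ω : ℤ)) - n = -(k : ℤ)}
      = ((k : ENNReal) / n) * μ {ω | (∑ i ∈ range n, (ξ i ω : ℤ)) - n = -(k : ℤ)} :=
  prob_cycle_lemma_general μ ξ hindep hident n k hk
end
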